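/- Let S be a nonempty finite set of strings over a linearly ordered alphabet, let m be the lexicographically least element of S and M the lexicographically greatest element of S. Then for every X ∈ S, lcp(m,M) is a prefix of X. Consequently, the longest string that is a common prefix of all elements of S is exactly lcp(m,M). -/
import Mathlib


/-- Longest common prefix of two lists. -/
def lcp {α : Type*} [DecidableEq α] : List α → List α → List α
  | a :: x, b :: y => if a = b then a :: lcp x y else []
  | _, _ => []

/-- Non-strict lexicographic order on lists. -/
def lexLe {α : Type*} [LT α] (x y : List α) : Prop :=
  List.Lex (· < ·) x y ∨ x = y

lemma prefix_lcp {α : Type*} [DecidableEq α] :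
    ∀ (p x y : List α), p <+: x → p <+: y → p <+: lcp x y
  | [], _, _, _, _ => List.nil_prefix
  | a :: p, b :: x, c :: y, hx, hy => by
    obtain ⟨hab, hpx⟩ := (List.cons_prefix_cons.mp hx)
    obtain ⟨hac, hpy⟩ := (List.cons_prefix_cons.mp hy)
    subst hab; subst hac
    simp only [lcp, if_pos rfl]
    exact List.cons_prefix_cons.mpr ⟨rfl, prefix_lcp p x y hpx hpy⟩
  | a :: p, [], _, hx, _ => absurd hx (by simp)
  | a :: p, _ :: _, [], _, hy => absurd hy (by simp)

lemma lcp_key {A : Type*} [LinearOrder A] :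
    ∀ (m M X : List A), lexLe m X → lexLe X M → lcp m M <+: X
  | [], M, X, _, _ => by simp [lcp]
  | a :: m, [], X, _, _ => by simp [lcp]
  | a :: m, b :: M, X, h1, h2 => by
    by_cases hab : a = b
    · subst hab
      -- X must be c :: X' with c = a
      have hX : ∃ X' , X = a :: X' ∧ lexLe m X' ∧ lexLe X' M := by
        match X, h1, h2 with
        | [], h1, h2 => cases h1 with
          | inl h => cases h
          | inr h => cases h
        | c :: X', h1, h2 =>
          have hca : c = a := by
            rcases h1 with h | h
            · rcases h2 with h' | h'
              · cases h with
                | rel hr => cases h' with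
                  | rel hr' => exact absurd (hr.trans hr') (lt_irrefl _)
                  | cons _ => rfl
                | cons _ => rfl
              · cases h' ; rfl
            · cases h ; rfl
          subst hca
          refine ⟨X', rfl, ?_, ?_⟩
          · rcases h1 with h | h
            · cases h with
              | rel hr => exact absurd hr (lt_irrefl _)
              | cons h => exact Or.inl h
            · cases h ; exact Or.inr rfl
          · rcases h2 with h | h
            · cases h with
              | rel hr => exact absurd hr (lt_irrefl _)
              | cons h => exact Or.inl h
            · cases h ; exact Or.inr rfl
      obtain ⟨X', rfl, hmX, hXM⟩ := hX
      simp only [lcp, if_pos rfl]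
      exact List.cons_prefix_cons.mpr ⟨rfl, lcp_key m M X' hmX hXM⟩
    · simp [lcp, hab]

theorem lcp_min_max_is_common_prefix {A : Type*} [LinearOrder A]
    (S : Finset (List A)) (hS : S.Nonempty) (m M : List A)
    (hm : m ∈ S) (hmin : ∀ X ∈ S, lexLe m X)
    (hM : M ∈ S) (hmax : ∀ X ∈ S, lexLe X M) :
    (∀ X ∈ S, lcp m M <+: X) ∧
      (∀ p : List A, (∀ X ∈ S, p <+: X) → p <+: lcp m M) := by
  constructor
  · intro X hX
    exact lcp_key m M X (hmin X hX) (hmax X hX)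
  · intro p hp
    exact prefix_lcp p m M (hp m hm) (hp M hM)
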